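/- arXiv:2506.15660 — 3 statements merged into one kernel-verified Lean document; each statement's English description precedes it below -/
import Mathlib

section
/- Let A ∈ ℝ^{m×n} be a nonzero matrix with effective rank ρ = ‖A‖_F²/‖A‖² satisfying ρ ≥ 7, let X₁, X₂ be independent standard Gaussian vectors in ℝⁿ, and let θ ≥ 1. Then the Counterbalance estimator satisfies P(T^cb(θ,X) ≤ ‖A‖) ≤ θ⁻⁴/8. -/
open MeasureTheory ProbabilityTheory Real Matrix

/-- Spectral norm (ℓ²→ℓ² operator norm) of a real matrix. -/
noncomputable def matrixSpectralNorm {m n : ℕ} (A : Matrix (Fin m) (Fin n) ℝ) : ℝ :=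
  ‖LinearMap.toContinuousLinearMap (Matrix.toEuclideanLin A)‖

/-- Frobenius norm of a real matrix. -/
noncomputable def frobeniusNorm {m n : ℕ} (A : Matrix (Fin m) (Fin n) ℝ) : ℝ :=
  Real.sqrt (∑ i, ∑ j, (A i j) ^ 2)

/-- Effective rank `ρ = ‖A‖_F² / ‖A‖²`. -/
noncomputable def effectiveRank {m n : ℕ} (A : Matrix (Fin m) (Fin n) ℝ) : ℝ :=
  frobeniusNorm A ^ 2 / matrixSpectralNorm A ^ 2

/-- The standard Gaussian measure on `EuclideanSpace ℝ (Fin n)`: the law of a random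
vector with i.i.d. `N(0,1)` coordinates. -/
noncomputable def stdGaussian (n : ℕ) : Measure (EuclideanSpace ℝ (Fin n)) :=
  (Measure.pi fun _ : Fin n => gaussianReal 0 1).map
    (MeasurableEquiv.toLp 2 (Fin n → ℝ))

/-- CDF of the chi-squared distribution with one degree of freedom:
`χ₁²(t) = P(ξ² ≤ t)` for `ξ ~ N(0,1)`. -/
noncomputable def chiSq1CDF (t : ℝ) : ℝ :=
  ((gaussianReal 0 1) {x : ℝ | x ^ 2 ≤ t}).toReal

/-- Density of the chi-squared distribution with one degree of freedom:
`p₁(u) = e^{-u/2} / √(2 π u)`. -/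
noncomputable def chiSq1PDF (u : ℝ) : ℝ :=
  Real.exp (-u / 2) / Real.sqrt (2 * Real.pi * u)

/-- Density `p_{(1,α)}` of `ξ² + α η²` for `ξ, η` i.i.d. `N(0,1)`:
`p_{(1,α)}(t) = ∫₀^t p₁(s) (1/α) p₁((t-s)/α) ds`. -/
noncomputable def weightedChiSqPDF (α : ℝ) (t : ℝ) : ℝ :=
  ∫ s in (0:ℝ)..t, chiSq1PDF s * ((1 / α) * chiSq1PDF ((t - s) / α))

/-- The Counterbalance estimator
`T^cb(θ, (x₁, x₂)) = θ √((‖AᵀAx₁‖/‖Ax₁‖)² + ‖Ax₂‖²)`. -/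
noncomputable def counterbalance {m n : ℕ} (A : Matrix (Fin m) (Fin n) ℝ) (θ : ℝ)
    (x₁ x₂ : EuclideanSpace ℝ (Fin n)) : ℝ :=
  θ * Real.sqrt ((‖Matrix.toEuclideanLin Aᵀ (Matrix.toEuclideanLin A x₁)‖ /
      ‖Matrix.toEuclideanLin A x₁‖) ^ 2 + ‖Matrix.toEuclideanLin A x₂‖ ^ 2)

/-!
Since `T^cb(θ, X) ≥ θ ‖A X₂‖`, the event `T^cb ≤ ‖A‖` forces `‖A X₂‖² ≤ ‖A‖² / θ²`.
In an orthonormal eigenbasis `(vᵢ)` of `AᵀA` with eigenvalues `λᵢ` one has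
`‖A x‖² = ∑ λᵢ ⟪vᵢ, x⟫²`, and the coordinates `⟪vᵢ, X₂⟫` are i.i.d. `N(0,1)`, so the Chernoff
bound with parameter `2θ²/‖A‖²` gives `P ≤ e² ∏ (1 + 4θ² uᵢ)^(-1/2)` where
`uᵢ = λᵢ / ‖A‖² ∈ [0, 1]` and `∑ uᵢ = ρ ≥ 7`. Bernoulli's inequality `(1 + a)^u ≤ 1 + a u`
bounds the product by `(1 + 4θ²)^(-ρ/2) ≤ (2θ)^(-7)`, and `e² (2θ)^(-7) ≤ θ⁻⁴ / 8`.
-/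

open scoped RealInnerProductSpace

/-- For `c ≤ -1/2` both sides are `0`: the integrand is not integrable and `√` of a nonpositive
number is `0`. -/
lemma integral_exp_neg_mul_sq_gaussianReal (c : ℝ) :
    ∫ x, exp (-c * x ^ 2) ∂gaussianReal 0 1 = (√(1 + 2 * c))⁻¹ := by
  have h : ∀ x : ℝ, -(x - 0) ^ 2 / (2 * ((1 : NNReal) : ℝ)) + -c * x ^ 2 = -(c + 1 / 2) * x ^ 2 :=
    fun x => by push_cast; ring
  simp_rw [integral_gaussianReal_eq_integral_smul one_ne_zero, gaussianPDFReal, smul_eq_mul,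
    mul_assoc, ← Real.exp_add, h, integral_const_mul, integral_gaussian, NNReal.coe_one, mul_one,
    ← Real.sqrt_inv]
  rw [← Real.sqrt_mul (by positivity)]
  congr 1
  field_simp
  ring

lemma integral_exp_neg_sum_mul_inner_sq_stdGaussian {ι E : Type*} [Fintype ι]
    [NormedAddCommGroup E] [InnerProductSpace ℝ E] [FiniteDimensional ℝ E] [MeasurableSpace E]
    [BorelSpace E] (b : OrthonormalBasis ι ℝ E) (c : ι → ℝ) :
    ∫ x, exp (-∑ i, c i * ⟪b i, x⟫ ^ 2) ∂ProbabilityTheory.stdGaussian E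
      = ∏ i, (√(1 + 2 * c i))⁻¹ := by
  rw [ProbabilityTheory.stdGaussian_eq_map_pi_orthonormalBasis b,
    integral_map (Measurable.aemeasurable (by fun_prop)) (by fun_prop)]
  have h : ∀ y : ι → ℝ, exp (-∑ i, c i * ⟪b i, ∑ j, y j • b j⟫ ^ 2)
      = ∏ i, exp (-c i * y i ^ 2) := by
    intro y
    simp_rw [b.orthonormal.inner_right_fintype, ← exp_sum, ← Finset.sum_neg_distrib, neg_mul]
  simp_rw [h, integral_fintype_prod_eq_prod (f := fun i y => exp (-c i * y ^ 2)),
    integral_exp_neg_mul_sq_gaussianReal]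

lemma stdGaussian_eq_stdGaussian_euclideanSpace (n : ℕ) :
    stdGaussian n = ProbabilityTheory.stdGaussian (EuclideanSpace ℝ (Fin n)) :=
  ProbabilityTheory.map_pi_eq_stdGaussian

namespace Matrix.IsHermitian

variable {ι : Type*} [Fintype ι] [DecidableEq ι] {M : Matrix ι ι ℝ} (hM : M.IsHermitian)

lemma toEuclideanLin_eigenvectorBasis (i : ι) :
    toEuclideanLin M (hM.eigenvectorBasis i) = hM.eigenvalues i • hM.eigenvectorBasis i :=
  WithLp.ofLp_injective 2 (hM.mulVec_eigenvectorBasis i)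

lemma inner_toEuclideanLin_self (x : EuclideanSpace ℝ ι) :
    ⟪x, toEuclideanLin M x⟫ = ∑ i, hM.eigenvalues i * ⟪hM.eigenvectorBasis i, x⟫ ^ 2 := by
  rw [← hM.eigenvectorBasis.sum_inner_mul_inner]
  refine Finset.sum_congr rfl fun i _ => ?_
  rw [← isSymmetric_toEuclideanLin_iff.mpr hM, toEuclideanLin_eigenvectorBasis,
    real_inner_smul_left, real_inner_comm]
  ring

end Matrix.IsHermitian

lemma Matrix.norm_toEuclideanLin_sq {ι κ : Type*} [Fintype ι] [Fintype κ] [DecidableEq ι]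
    [DecidableEq κ] (A : Matrix ι κ ℝ) (x : EuclideanSpace ℝ κ) :
    ‖toEuclideanLin A x‖ ^ 2 = ⟪x, toEuclideanLin (Aᴴ * A) x⟫ := by
  rw [toLpLin_mul_same, LinearMap.comp_apply, toEuclideanLin_conjTranspose_eq_adjoint,
    LinearMap.adjoint_inner_right, real_inner_self_eq_norm_sq]

lemma one_add_rpow_sum_le_prod {ι : Type*} (s : Finset ι) {a : ℝ} (ha : -1 < a) {u : ι → ℝ}
    (hu : ∀ i ∈ s, u i ∈ Set.Icc 0 1) :
    (1 + a) ^ (∑ i ∈ s, u i) ≤ ∏ i ∈ s, (1 + a * u i) := by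
  rw [Real.rpow_sum_of_pos (by linarith)]
  refine Finset.prod_le_prod (fun i _ => Real.rpow_nonneg (by linarith) _) fun i hi => ?_
  rw [mul_comm]
  exact rpow_one_add_le_one_add_mul_self ha.le (hu i hi).1 (hu i hi).2

lemma exp_two_mul_prod_inv_sqrt_le {ι : Type*} [Fintype ι] {θ : ℝ} (hθ : 1 ≤ θ) {u : ι → ℝ}
    (hu : ∀ i, u i ∈ Set.Icc 0 1) (hsum : 7 ≤ ∑ i, u i) :
    exp 2 * ∏ i, (√(1 + 4 * θ ^ 2 * u i))⁻¹ ≤ (θ ^ 4)⁻¹ / 8 := by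
  have hprod : (2 * θ) ^ 7 ≤ ∏ i, √(1 + 4 * θ ^ 2 * u i) := by
    rw [← Real.sqrt_prod _ fun i _ => by nlinarith [(hu i).1],
      ← Real.sqrt_sq (by positivity : (0 : ℝ) ≤ (2 * θ) ^ 7)]
    refine Real.sqrt_le_sqrt ?_
    calc ((2 * θ) ^ 7) ^ 2 = (4 * θ ^ 2) ^ (7 : ℝ) := by norm_cast; ring
      _ ≤ (1 + 4 * θ ^ 2) ^ (7 : ℝ) := by gcongr; linarith
      _ ≤ (1 + 4 * θ ^ 2) ^ (∑ i, u i) := by gcongr; nlinarith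
      _ ≤ ∏ i, (1 + 4 * θ ^ 2 * u i) :=
        one_add_rpow_sum_le_prod _ (by nlinarith) fun i _ => hu i
  have hexp : exp 2 ≤ 16 := by
    rw [show (2 : ℝ) = 1 + 1 by norm_num, Real.exp_add]
    nlinarith [Real.exp_one_lt_d9, Real.exp_pos 1]
  rw [Finset.prod_inv_distrib, ← div_eq_mul_inv]
  calc exp 2 / ∏ i, √(1 + 4 * θ ^ 2 * u i) ≤ 16 / (2 * θ) ^ 7 := by gcongr
    _ ≤ (θ ^ 4)⁻¹ / 8 := by
        rw [div_le_div_iff₀ (by positivity) (by norm_num), mul_pow]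
        field_simp
        nlinarith [one_le_pow₀ (n := 3) hθ]

section EffectiveRank

variable {m n : ℕ} (A : Matrix (Fin m) (Fin n) ℝ)

lemma eigenvalues_conjTranspose_mul_self_le_sq_matrixSpectralNorm (i : Fin n) :
    (isHermitian_conjTranspose_mul_self A).eigenvalues i ≤ matrixSpectralNorm A ^ 2 := by
  set hM := isHermitian_conjTranspose_mul_self A
  have hb : ‖hM.eigenvectorBasis i‖ = 1 := hM.eigenvectorBasis.orthonormal.1 i
  calc hM.eigenvalues i = ‖toEuclideanLin A (hM.eigenvectorBasis i)‖ ^ 2 := by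
        rw [norm_toEuclideanLin_sq, hM.toEuclideanLin_eigenvectorBasis, real_inner_smul_right,
          real_inner_self_eq_norm_sq, hb, one_pow, mul_one]
    _ ≤ (matrixSpectralNorm A * 1) ^ 2 := by
        rw [← hb]
        exact pow_le_pow_left₀ (norm_nonneg _)
          ((toEuclideanLin A).toContinuousLinearMap.le_opNorm _) 2
    _ = matrixSpectralNorm A ^ 2 := by rw [mul_one]

lemma sum_eigenvalues_conjTranspose_mul_self_eq_sq_frobeniusNorm :
    ∑ i, (isHermitian_conjTranspose_mul_self A).eigenvalues i = frobeniusNorm A ^ 2 := by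
  have h := (isHermitian_conjTranspose_mul_self A).trace_eq_sum_eigenvalues
  simp only [RCLike.ofReal_real_eq_id, id] at h
  rw [← h, frobeniusNorm, Real.sq_sqrt (by positivity), Finset.sum_comm]
  simp [trace, mul_apply, sq]

lemma stdGaussian_real_setOf_norm_toEuclideanLin_sq_le_le (t : ℝ) {l : ℝ} (hl : 0 ≤ l) :
    (ProbabilityTheory.stdGaussian (EuclideanSpace ℝ (Fin n))).real
        {x | ‖toEuclideanLin A x‖ ^ 2 ≤ t}
      ≤ exp (l * t) *
          ∏ i, (√(1 + 2 * (l * (isHermitian_conjTranspose_mul_self A).eigenvalues i)))⁻¹ := by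
  have hint : Integrable (fun x => exp (-l * ‖toEuclideanLin A x‖ ^ 2))
      (ProbabilityTheory.stdGaussian (EuclideanSpace ℝ (Fin n))) := by
    refine Integrable.of_bound (by fun_prop) 1 (Filter.Eventually.of_forall fun x => ?_)
    rw [Real.norm_of_nonneg (exp_nonneg _), exp_le_one_iff]
    nlinarith [sq_nonneg ‖toEuclideanLin A x‖]
  have h := measure_le_le_exp_mul_mgf t (neg_nonpos.mpr hl) hint
  rw [neg_neg, mgf] at h
  refine h.trans_eq ?_
  rw [← integral_exp_neg_sum_mul_inner_sq_stdGaussian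
    (isHermitian_conjTranspose_mul_self A).eigenvectorBasis]
  congr 2 with x
  beta_reduce
  rw [norm_toEuclideanLin_sq, (isHermitian_conjTranspose_mul_self A).inner_toEuclideanLin_self,
    neg_mul, Finset.mul_sum]
  simp_rw [mul_assoc]

lemma stdGaussian_real_norm_toEuclideanLin_sq_le_le_of_seven_le_effectiveRank
    (hρ : 7 ≤ effectiveRank A) {θ : ℝ} (hθ : 1 ≤ θ) :
    (ProbabilityTheory.stdGaussian (EuclideanSpace ℝ (Fin n))).real
        {x | ‖toEuclideanLin A x‖ ^ 2 ≤ (matrixSpectralNorm A / θ) ^ 2} ≤ (θ ^ 4)⁻¹ / 8 := by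
  rw [effectiveRank] at hρ
  set s := matrixSpectralNorm A
  have hs : 0 < s := (norm_nonneg _).lt_of_ne fun hs0 => by
    rw [show s = 0 from hs0.symm] at hρ
    norm_num at hρ
  have hchernoff := stdGaussian_real_setOf_norm_toEuclideanLin_sq_le_le A ((s / θ) ^ 2)
    (l := 2 * θ ^ 2 / s ^ 2) (by positivity)
  have hexponent : 2 * θ ^ 2 / s ^ 2 * (s / θ) ^ 2 = 2 := by field_simp
  have hfactor (x : ℝ) : 2 * (2 * θ ^ 2 / s ^ 2 * x) = 4 * θ ^ 2 * (x / s ^ 2) := by ring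
  simp_rw [hexponent, hfactor] at hchernoff
  have hu (i : Fin n) :
      (isHermitian_conjTranspose_mul_self A).eigenvalues i / s ^ 2 ∈ Set.Icc 0 1 :=
    ⟨div_nonneg (eigenvalues_conjTranspose_mul_self_nonneg A i) (sq_nonneg s),
      (div_le_one (by positivity)).mpr
        (eigenvalues_conjTranspose_mul_self_le_sq_matrixSpectralNorm A i)⟩
  have hsum : 7 ≤ ∑ i, (isHermitian_conjTranspose_mul_self A).eigenvalues i / s ^ 2 := by
    rwa [← Finset.sum_div, sum_eigenvalues_conjTranspose_mul_self_eq_sq_frobeniusNorm]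
  exact hchernoff.trans (exp_two_mul_prod_inv_sqrt_le hθ hu hsum)

end EffectiveRank

lemma mul_norm_toEuclideanLin_le_counterbalance {m n : ℕ} (A : Matrix (Fin m) (Fin n) ℝ)
    {θ : ℝ} (hθ : 0 ≤ θ) (x₁ x₂ : EuclideanSpace ℝ (Fin n)) :
    θ * ‖toEuclideanLin A x₂‖ ≤ counterbalance A θ x₁ x₂ := by
  rw [counterbalance]
  gcongr
  exact Real.le_sqrt_of_sq_le (le_add_of_nonneg_left (sq_nonneg _))

theorem counterbalance_underestimation_of_seven_le_effectiveRank_general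
    {m n : ℕ} (A : Matrix (Fin m) (Fin n) ℝ)
    (hρ : 7 ≤ effectiveRank A)
    {Ω : Type*} [MeasureSpace Ω]
    (X₁ X₂ : Ω → EuclideanSpace ℝ (Fin n))
    (hX₂ : Measure.map X₂ ℙ = stdGaussian n)
    (θ : ℝ) (hθ : 1 ≤ θ) :
    ℙ {ω | counterbalance A θ (X₁ ω) (X₂ ω) ≤ matrixSpectralNorm A} ≤
      ENNReal.ofReal ((θ ^ 4)⁻¹ / 8) := by
  set S := {x : EuclideanSpace ℝ (Fin n) |
    ‖toEuclideanLin A x‖ ^ 2 ≤ (matrixSpectralNorm A / θ) ^ 2}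
  have hθ0 : 0 < θ := by linarith
  have hevent : {ω | counterbalance A θ (X₁ ω) (X₂ ω) ≤ matrixSpectralNorm A} ⊆ X₂ ⁻¹' S :=
    fun ω hω => by
      have h := (mul_norm_toEuclideanLin_le_counterbalance A hθ0.le (X₁ ω) (X₂ ω)).trans hω
      exact pow_le_pow_left₀ (norm_nonneg _) ((le_div_iff₀' hθ0).mpr h) 2
  have hX₂m : AEMeasurable X₂ ℙ := AEMeasurable.of_map_ne_zero <| by
    rw [hX₂, stdGaussian_eq_stdGaussian_euclideanSpace]
    exact IsProbabilityMeasure.ne_zero _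
  calc ℙ {ω | counterbalance A θ (X₁ ω) (X₂ ω) ≤ matrixSpectralNorm A} ≤ ℙ (X₂ ⁻¹' S) :=
        measure_mono hevent
    _ = ProbabilityTheory.stdGaussian (EuclideanSpace ℝ (Fin n)) S := by
      rw [← Measure.map_apply_of_aemeasurable hX₂m (measurableSet_le (by fun_prop) (by fun_prop)),
        hX₂, stdGaussian_eq_stdGaussian_euclideanSpace]
    _ = ENNReal.ofReal ((ProbabilityTheory.stdGaussian (EuclideanSpace ℝ (Fin n))).real S) := by
      rw [ofReal_measureReal]
    _ ≤ ENNReal.ofReal ((θ ^ 4)⁻¹ / 8) := ENNReal.ofReal_le_ofReal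
      (stdGaussian_real_norm_toEuclideanLin_sq_le_le_of_seven_le_effectiveRank A hρ hθ)

/-- if `ρ = ‖A‖_F²/‖A‖² ≥ 7` and `X₁, X₂` are independent standard
Gaussian vectors, then for `θ ≥ 1`, `P(T^cb(θ,X) ≤ ‖A‖) ≤ θ⁻⁴/8`. -/
theorem counterbalance_underestimation_of_seven_le_effectiveRank
    {m n : ℕ} (A : Matrix (Fin m) (Fin n) ℝ) (hA : A ≠ 0)
    (hρ : 7 ≤ effectiveRank A)
    {Ω : Type*} [MeasureSpace Ω] [IsProbabilityMeasure (ℙ : Measure Ω)]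
    (X₁ X₂ : Ω → EuclideanSpace ℝ (Fin n))
    (hX₁ : Measure.map X₁ ℙ = stdGaussian n)
    (hX₂ : Measure.map X₂ ℙ = stdGaussian n)
    (hindep : IndepFun X₁ X₂ ℙ)
    (θ : ℝ) (hθ : 1 ≤ θ) :
    ℙ {ω | counterbalance A θ (X₁ ω) (X₂ ω) ≤ matrixSpectralNorm A} ≤
      ENNReal.ofReal ((θ ^ 4)⁻¹ / 8) :=
  counterbalance_underestimation_of_seven_le_effectiveRank_general A hρ X₁ X₂ hX₂ θ hθ
end

section
/- Let A ∈ ℝ^{m×n} be a nonzero matrix and let X₁, X₂ be independent standard Gaussian vectors in ℝⁿ. Then for every θ > 0, the Dixon estimator T^d(θ,X) = θ · max(√(‖AᵀAX₁‖), ‖AX₂‖) satisfies P(T^d(θ,X) ≤ ‖A‖) ≤ (2/π) · θ⁻³. -/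
open MeasureTheory ProbabilityTheory Real Matrix

/-! The estimator can only be small if both `X₁` and `X₂` are nearly orthogonal to a top right
singular vector `v` of `A`: with `‖v‖ = 1` and `AᵀA v = ‖A‖² v` one has
`‖A‖² |⟪v, x⟫| ≤ ‖AᵀA x‖` and `‖A‖ |⟪v, x⟫| ≤ ‖A x‖`. So the event forces `|⟪v, X₁⟫| ≤ θ⁻²` and
`|⟪v, X₂⟫| ≤ θ⁻¹`. The projections `⟪v, Xᵢ⟫` are independent standard normal, and a standard
normal lies in `[-a, a]` with probability at most `2a / √(2π)`; the product of the two bounds is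
`(2/π) θ⁻³`. -/

open scoped InnerProductSpace NNReal

theorem gaussianPDFReal_le (μ : ℝ) (v : ℝ≥0) (x : ℝ) :
    gaussianPDFReal μ v x ≤ (√(2 * π * v))⁻¹ := by
  rw [gaussianPDFReal]
  refine mul_le_of_le_one_right (by positivity) (exp_le_one_iff.mpr ?_)
  exact div_nonpos_of_nonpos_of_nonneg (neg_nonpos.mpr (sq_nonneg _)) (by positivity)

theorem gaussianReal_le_mul_volume (μ : ℝ) {v : ℝ≥0} (hv : v ≠ 0) (s : Set ℝ) :
    gaussianReal μ v s ≤ ENNReal.ofReal (√(2 * π * v))⁻¹ * volume s := by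
  rw [gaussianReal_apply μ hv, ← setLIntegral_const]
  exact lintegral_mono fun x => ENNReal.ofReal_le_ofReal (gaussianPDFReal_le μ v x)

theorem gaussianReal_Icc_le (μ : ℝ) {v : ℝ≥0} (hv : v ≠ 0) (a b : ℝ) :
    gaussianReal μ v (Set.Icc a b) ≤ ENNReal.ofReal ((b - a) / √(2 * π * v)) := by
  refine (gaussianReal_le_mul_volume μ hv _).trans_eq ?_
  rw [Real.volume_Icc, ← ENNReal.ofReal_mul (by positivity), inv_mul_eq_div]

theorem ProbabilityTheory.HasLaw.measure_preimage_Icc_le_of_gaussianReal {Ω : Type*}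
    [MeasurableSpace Ω] {P : Measure Ω} {Y : Ω → ℝ} {μ : ℝ} {v : ℝ≥0}
    (hY : HasLaw Y (gaussianReal μ v) P) (hv : v ≠ 0) (a b : ℝ) :
    P (Y ⁻¹' Set.Icc a b) ≤ ENNReal.ofReal ((b - a) / √(2 * π * v)) := by
  rw [← Measure.map_apply_of_aemeasurable hY.aemeasurable measurableSet_Icc, hY.map_eq]
  exact gaussianReal_Icc_le μ hv a b

theorem hasLaw_stdGaussian_of_map_eq {Ω : Type*} [MeasurableSpace Ω] {P : Measure Ω} {n : ℕ}
    {X : Ω → EuclideanSpace ℝ (Fin n)} (hX : P.map X = stdGaussian n) :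
    HasLaw X (ProbabilityTheory.stdGaussian (EuclideanSpace ℝ (Fin n))) P := by
  have hstd : stdGaussian n = ProbabilityTheory.stdGaussian (EuclideanSpace ℝ (Fin n)) :=
    map_pi_eq_stdGaussian
  rw [hstd] at hX
  exact ⟨.of_map_ne_zero (hX ▸ IsProbabilityMeasure.ne_zero _), hX⟩

theorem hasLaw_inner_stdGaussian {E : Type*} [NormedAddCommGroup E] [InnerProductSpace ℝ E]
    [FiniteDimensional ℝ E] [MeasurableSpace E] [BorelSpace E] {v : E} (hv : ‖v‖ = 1) :
    HasLaw (fun x => ⟪v, x⟫_ℝ) (gaussianReal 0 1) (ProbabilityTheory.stdGaussian E) where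
  map_eq := by
    have := IsGaussian.map_eq_gaussianReal (μ := ProbabilityTheory.stdGaussian E) (innerSL ℝ v)
    rw [integral_strongDual_stdGaussian, variance_dual_stdGaussian, innerSL_apply_norm, hv] at this
    simpa using this

namespace ContinuousLinearMap

noncomputable def dixonEstimator {E F : Type*} [NormedAddCommGroup E] [InnerProductSpace ℝ E]
    [CompleteSpace E] [NormedAddCommGroup F] [InnerProductSpace ℝ F] [CompleteSpace F]
    (T : E →L[ℝ] F) (θ : ℝ) (x₁ x₂ : E) : ℝ :=
  θ * max √‖adjoint T (T x₁)‖ ‖T x₂‖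

section

variable {E F : Type*} [NormedAddCommGroup E] [InnerProductSpace ℝ E] [CompleteSpace E]
  [NormedAddCommGroup F] [InnerProductSpace ℝ F] [CompleteSpace F] {T : E →L[ℝ] F} {v : E}

theorem sq_opNorm_mul_inner_eq (hTv : (adjoint T ∘L T) v = ‖T‖ ^ 2 • v) (x : E) :
    ‖T‖ ^ 2 * ⟪v, x⟫_ℝ = ⟪T v, T x⟫_ℝ := by
  rw [← adjoint_inner_left, ← comp_apply, hTv, real_inner_smul_left]

theorem sq_opNorm_mul_abs_inner_le (hv : ‖v‖ = 1) (hTv : (adjoint T ∘L T) v = ‖T‖ ^ 2 • v)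
    (x : E) : ‖T‖ ^ 2 * |⟪v, x⟫_ℝ| ≤ ‖adjoint T (T x)‖ := by
  calc ‖T‖ ^ 2 * |⟪v, x⟫_ℝ| = |⟪v, adjoint T (T x)⟫_ℝ| := by
        rw [adjoint_inner_right, ← sq_opNorm_mul_inner_eq hTv, abs_mul, abs_sq]
    _ ≤ ‖adjoint T (T x)‖ := by simpa [hv] using abs_real_inner_le_norm v (adjoint T (T x))

theorem opNorm_mul_abs_inner_le (hv : ‖v‖ = 1) (hTv : (adjoint T ∘L T) v = ‖T‖ ^ 2 • v)
    (x : E) : ‖T‖ * |⟪v, x⟫_ℝ| ≤ ‖T x‖ := by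
  rcases (norm_nonneg T).eq_or_lt with hT | hT
  · simp [← hT]
  refine le_of_mul_le_mul_left ?_ hT
  calc ‖T‖ * (‖T‖ * |⟪v, x⟫_ℝ|) = |⟪T v, T x⟫_ℝ| := by
        rw [← mul_assoc, ← sq, ← sq_opNorm_mul_inner_eq hTv, abs_mul, abs_sq]
    _ ≤ ‖T v‖ * ‖T x‖ := abs_real_inner_le_norm _ _
    _ ≤ ‖T‖ * ‖T x‖ := by gcongr; simpa [hv] using T.le_opNorm v

theorem abs_inner_le_of_mul_sqrt_norm_adjoint_comp_self_le (hv : ‖v‖ = 1)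
    (hTv : (adjoint T ∘L T) v = ‖T‖ ^ 2 • v) (hT : 0 < ‖T‖) {θ : ℝ} (hθ : 0 < θ) {x : E}
    (hx : θ * √‖adjoint T (T x)‖ ≤ ‖T‖) : |⟪v, x⟫_ℝ| ≤ θ⁻¹ ^ 2 := by
  have hsq : θ ^ 2 * ‖adjoint T (T x)‖ ≤ ‖T‖ ^ 2 := by
    simpa [mul_pow, sq_sqrt (norm_nonneg _)] using pow_le_pow_left₀ (by positivity) hx 2
  rw [inv_pow, ← one_div, le_div_iff₀' (by positivity)]
  refine le_of_mul_le_mul_left ?_ (pow_pos hT 2)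
  calc ‖T‖ ^ 2 * (θ ^ 2 * |⟪v, x⟫_ℝ|) = θ ^ 2 * (‖T‖ ^ 2 * |⟪v, x⟫_ℝ|) := by ring
    _ ≤ θ ^ 2 * ‖adjoint T (T x)‖ := by gcongr; exact sq_opNorm_mul_abs_inner_le hv hTv x
    _ ≤ ‖T‖ ^ 2 * 1 := by rwa [mul_one]

theorem abs_inner_le_of_mul_norm_le (hv : ‖v‖ = 1) (hTv : (adjoint T ∘L T) v = ‖T‖ ^ 2 • v)
    (hT : 0 < ‖T‖) {θ : ℝ} (hθ : 0 < θ) {x : E} (hx : θ * ‖T x‖ ≤ ‖T‖) :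
    |⟪v, x⟫_ℝ| ≤ θ⁻¹ := by
  rw [← one_div, le_div_iff₀' hθ]
  refine le_of_mul_le_mul_left ?_ hT
  calc ‖T‖ * (θ * |⟪v, x⟫_ℝ|) = θ * (‖T‖ * |⟪v, x⟫_ℝ|) := by ring
    _ ≤ θ * ‖T x‖ := by gcongr; exact opNorm_mul_abs_inner_le hv hTv x
    _ ≤ ‖T‖ * 1 := by rwa [mul_one]

theorem abs_inner_le_of_dixonEstimator_le (hv : ‖v‖ = 1)
    (hTv : (adjoint T ∘L T) v = ‖T‖ ^ 2 • v) (hT : 0 < ‖T‖) {θ : ℝ} (hθ : 0 < θ) {x₁ x₂ : E}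
    (h : dixonEstimator T θ x₁ x₂ ≤ ‖T‖) : |⟪v, x₁⟫_ℝ| ≤ θ⁻¹ ^ 2 ∧ |⟪v, x₂⟫_ℝ| ≤ θ⁻¹ := by
  obtain ⟨h₁, h₂⟩ := max_le_iff.mp ((mul_max_of_nonneg _ _ hθ.le).symm.trans_le h)
  exact ⟨abs_inner_le_of_mul_sqrt_norm_adjoint_comp_self_le hv hTv hT hθ h₁,
    abs_inner_le_of_mul_norm_le hv hTv hT hθ h₂⟩

end

theorem exists_norm_eq_one_adjoint_comp_self_apply_eq {E F : Type*} [NormedAddCommGroup E]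
    [InnerProductSpace ℝ E] [FiniteDimensional ℝ E] [Nontrivial E] [NormedAddCommGroup F]
    [InnerProductSpace ℝ F] [CompleteSpace F] (T : E →L[ℝ] F) :
    ∃ v : E, ‖v‖ = 1 ∧ (adjoint T ∘L T) v = ‖T‖ ^ 2 • v := by
  obtain ⟨v, hv, hmax⟩ := (isCompact_sphere (0 : E) 1).exists_isMaxOn
    (NormedSpace.sphere_nonempty.mpr zero_le_one) T.continuous.norm.continuousOn
  have hv : ‖v‖ = 1 := mem_sphere_zero_iff_norm.mp hv
  have hnorm : ‖T‖ = ‖T v‖ := le_antisymm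
    (opNorm_le_of_unit_norm (norm_nonneg _) fun x hx => hmax (by simpa using hx))
    (by simpa [hv] using T.le_opNorm v)
  have hextr : IsMaxOn (adjoint T ∘L T).reApplyInnerSelf (Metric.sphere 0 ‖v‖) v := by
    intro x hx
    simp only [Set.mem_ofPred_eq, reApplyInnerSelf_apply, ← apply_norm_sq_eq_inner_adjoint_left]
    gcongr
    exact hmax (by simpa [hv] using hx)
  refine ⟨v, hv, ?_⟩
  rw [(isPositive_adjoint_comp_self T).isSelfAdjoint.eq_smul_self_of_isLocalExtrOn_real
    (Or.inr hextr.localize), rayleighQuotient, reApplyInnerSelf_apply,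
    ← apply_norm_sq_eq_inner_adjoint_left, hv, hnorm]
  simp

theorem measure_dixonEstimator_le_opNorm_le {E F Ω : Type*} [NormedAddCommGroup E]
    [InnerProductSpace ℝ E] [FiniteDimensional ℝ E] [MeasurableSpace E] [BorelSpace E]
    [NormedAddCommGroup F] [InnerProductSpace ℝ F] [CompleteSpace F] [MeasurableSpace Ω]
    {P : Measure Ω} {T : E →L[ℝ] F} (hT : T ≠ 0) {X₁ X₂ : Ω → E}
    (hX₁ : HasLaw X₁ (ProbabilityTheory.stdGaussian E) P)
    (hX₂ : HasLaw X₂ (ProbabilityTheory.stdGaussian E) P) (hindep : IndepFun X₁ X₂ P)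
    {θ : ℝ} (hθ : 0 < θ) :
    P {ω | dixonEstimator T θ (X₁ ω) (X₂ ω) ≤ ‖T‖} ≤ ENNReal.ofReal (2 / π * (θ ^ 3)⁻¹) := by
  have : Nontrivial E := by
    obtain ⟨x, hx⟩ := DFunLike.ne_iff.mp hT
    exact nontrivial_of_ne x 0 (by rintro rfl; simp at hx)
  obtain ⟨v, hv, hTv⟩ := T.exists_norm_eq_one_adjoint_comp_self_apply_eq
  have hY₁ : HasLaw (fun ω => ⟪v, X₁ ω⟫_ℝ) (gaussianReal 0 1) P :=
    (hasLaw_inner_stdGaussian hv).comp hX₁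
  have hY₂ : HasLaw (fun ω => ⟪v, X₂ ω⟫_ℝ) (gaussianReal 0 1) P :=
    (hasLaw_inner_stdGaussian hv).comp hX₂
  have hY : IndepFun (fun ω => ⟪v, X₁ ω⟫_ℝ) (fun ω => ⟪v, X₂ ω⟫_ℝ) P :=
    hindep.comp (by fun_prop : Measurable fun x => ⟪v, x⟫_ℝ) (by fun_prop)
  have hsub : {ω | dixonEstimator T θ (X₁ ω) (X₂ ω) ≤ ‖T‖} ⊆
      (fun ω => ⟪v, X₁ ω⟫_ℝ) ⁻¹' Set.Icc (-θ⁻¹ ^ 2) (θ⁻¹ ^ 2) ∩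
        (fun ω => ⟪v, X₂ ω⟫_ℝ) ⁻¹' Set.Icc (-θ⁻¹) θ⁻¹ := by
    intro ω hω
    obtain ⟨h₁, h₂⟩ := abs_inner_le_of_dixonEstimator_le hv hTv (norm_pos_iff.mpr hT) hθ hω
    exact ⟨abs_le.mp h₁, abs_le.mp h₂⟩
  grw [hsub, hY.measure_inter_preimage_eq_mul _ _ measurableSet_Icc measurableSet_Icc,
    hY₁.measure_preimage_Icc_le_of_gaussianReal one_ne_zero,
    hY₂.measure_preimage_Icc_le_of_gaussianReal one_ne_zero]
  rw [sub_neg_eq_add, sub_neg_eq_add, ← ENNReal.ofReal_mul (by positivity)]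
  refine le_of_eq (congrArg _ ?_)
  field_simp
  rw [NNReal.coe_one, mul_one, sq_sqrt (by positivity)]
  ring

end ContinuousLinearMap

theorem dixon_underestimation_general
    {m n : ℕ} (A : Matrix (Fin m) (Fin n) ℝ) (hA : A ≠ 0)
    {Ω : Type*} [MeasureSpace Ω]
    (X₁ X₂ : Ω → EuclideanSpace ℝ (Fin n))
    (hX₁ : Measure.map X₁ ℙ = stdGaussian n)
    (hX₂ : Measure.map X₂ ℙ = stdGaussian n)
    (hindep : IndepFun X₁ X₂ ℙ)
    (θ : ℝ) (hθ : 0 < θ) :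
    ℙ {ω | θ * max
          (Real.sqrt ‖Matrix.toEuclideanLin Aᵀ (Matrix.toEuclideanLin A (X₁ ω))‖)
          ‖Matrix.toEuclideanLin A (X₂ ω)‖ ≤ matrixSpectralNorm A} ≤
      ENNReal.ofReal (2 / Real.pi * (θ ^ 3)⁻¹) := by
  set T := LinearMap.toContinuousLinearMap (Matrix.toEuclideanLin A)
  have hgram x : Matrix.toEuclideanLin Aᵀ (Matrix.toEuclideanLin A x) = T.adjoint (T x) := by
    rw [← conjTranspose_eq_transpose_of_trivial, toEuclideanLin_conjTranspose_eq_adjoint]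
    rfl
  simp_rw [hgram]
  exact T.measure_dixonEstimator_le_opNorm_le (by simpa [T] using hA)
    (hasLaw_stdGaussian_of_map_eq hX₁) (hasLaw_stdGaussian_of_map_eq hX₂) hindep hθ

/-- for nonzero `A`, independent standard Gaussian vectors `X₁, X₂`
and `θ > 0`, the Dixon estimator `T^d(θ,X) = θ max(√‖AᵀAX₁‖, ‖AX₂‖)` satisfies
`P(T^d(θ,X) ≤ ‖A‖) ≤ (2/π) θ⁻³`. -/
theorem dixon_underestimation
    {m n : ℕ} (A : Matrix (Fin m) (Fin n) ℝ) (hA : A ≠ 0)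
    {Ω : Type*} [MeasureSpace Ω] [IsProbabilityMeasure (ℙ : Measure Ω)]
    (X₁ X₂ : Ω → EuclideanSpace ℝ (Fin n))
    (hX₁ : Measure.map X₁ ℙ = stdGaussian n)
    (hX₂ : Measure.map X₂ ℙ = stdGaussian n)
    (hindep : IndepFun X₁ X₂ ℙ)
    (θ : ℝ) (hθ : 0 < θ) :
    ℙ {ω | θ * max
          (Real.sqrt ‖Matrix.toEuclideanLin Aᵀ (Matrix.toEuclideanLin A (X₁ ω))‖)
          ‖Matrix.toEuclideanLin A (X₂ ω)‖ ≤ matrixSpectralNorm A} ≤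
      ENNReal.ofReal (2 / Real.pi * (θ ^ 3)⁻¹) :=
  dixon_underestimation_general A hA X₁ X₂ hX₁ hX₂ hindep θ hθ
end

section
/- Let ξ ~ N(0,1) and let η be a nonnegative integrable random variable independent of ξ. Then P(ξ² ≤ η) ≤ χ₁²(E[η]). -/
open MeasureTheory ProbabilityTheory Real Matrix

/-!
By independence, conditioning on `η` gives `P(ξ² ≤ η) = E[χ₁²(η)]`. On `[0, ∞)`,
`χ₁²(t) = 2 ∫₀^√t φ` (`φ` the standard normal density) has the decreasing derivative
`φ(√t) / √t`, so `χ₁²` is concave there and Jensen's inequality gives `E[χ₁²(η)] ≤ χ₁²(E[η])`.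
-/

open Set Filter intervalIntegral
open scoped NNReal ENNReal

lemma integral_neg_self_eq_two_mul {f : ℝ → ℝ} (hf : Continuous f)
    (heven : ∀ x, f (-x) = f x) (u : ℝ) : ∫ x in -u..u, f x = 2 * ∫ x in 0..u, f x := by
  have hneg : ∫ x in -u..0, f x = ∫ x in 0..u, f x := by
    simpa [heven] using (integral_comp_neg (a := 0) (b := u) f).symm
  rw [← integral_add_adjacent_intervals (b := 0) (hf.intervalIntegrable _ _)
    (hf.intervalIntegrable _ _), hneg]
  ring

lemma hasDerivAt_integral_sqrt {f : ℝ → ℝ} (hf : Continuous f) {t : ℝ} (ht : 0 < t) :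
    HasDerivAt (fun s => ∫ x in 0..√s, f x) (f √t / (2 * √t)) t :=
  ((hf.integral_hasStrictDerivAt 0 √t).hasDerivAt.comp t (hasDerivAt_sqrt ht.ne')).congr_deriv
    (by ring)

lemma continuous_integral_sqrt {f : ℝ → ℝ} (hf : Continuous f) :
    Continuous (fun t => ∫ x in 0..√t, f x) :=
  (continuous_primitive (fun _ _ => hf.intervalIntegrable _ _) 0).comp continuous_sqrt

lemma concaveOn_integral_sqrt {f : ℝ → ℝ} (hf : Continuous f) (hf_nonneg : ∀ x, 0 ≤ f x)
    (hf_anti : AntitoneOn f (Ici 0)) : ConcaveOn ℝ (Ici 0) (fun t => ∫ x in 0..√t, f x) := by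
  refine AntitoneOn.concaveOn_of_deriv (convex_Ici 0) (continuous_integral_sqrt hf).continuousOn
    ?_ ?_ <;> rw [interior_Ici]
  · exact fun t ht => (hasDerivAt_integral_sqrt hf ht).differentiableAt.differentiableWithinAt
  · intro s hs t ht hst
    rw [(hasDerivAt_integral_sqrt hf hs).deriv, (hasDerivAt_integral_sqrt hf ht).deriv]
    have hsqrt : √s ≤ √t := sqrt_le_sqrt hst
    have hs' : 0 < √s := sqrt_pos.2 hs
    gcongr
    · exact hf_nonneg _
    · exact hf_anti hs'.le (hs'.le.trans hsqrt) hsqrt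

lemma continuous_gaussianPDFReal (μ : ℝ) (v : ℝ≥0) : Continuous (gaussianPDFReal μ v) := by
  rw [gaussianPDFReal_def]
  fun_prop

lemma gaussianPDFReal_zero_neg (v : ℝ≥0) (x : ℝ) :
    gaussianPDFReal 0 v (-x) = gaussianPDFReal 0 v x := by
  simp [gaussianPDFReal]

lemma gaussianPDFReal_antitoneOn (μ : ℝ) (v : ℝ≥0) :
    AntitoneOn (gaussianPDFReal μ v) (Ici μ) := by
  intro x hx y _ hxy
  simp only [gaussianPDFReal]
  gcongr
  exact sub_nonneg.2 hx

lemma setOf_sq_le_eq_Icc {t : ℝ} (ht : 0 ≤ t) : {x : ℝ | x ^ 2 ≤ t} = Icc (-√t) √t := by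
  ext x
  simp [← sqrt_le_sqrt_iff ht, sqrt_sq_eq_abs, abs_le]

lemma gaussianReal_setOf_sq_le (t : ℝ) :
    gaussianReal 0 1 {x : ℝ | x ^ 2 ≤ t} = ENNReal.ofReal (chiSq1CDF t) := by
  rw [chiSq1CDF, ENNReal.ofReal_toReal (measure_ne_top _ _)]

lemma chiSq1CDF_nonneg (t : ℝ) : 0 ≤ chiSq1CDF t := ENNReal.toReal_nonneg

lemma chiSq1CDF_le_one (t : ℝ) : chiSq1CDF t ≤ 1 :=
  ENNReal.toReal_le_of_le_ofReal zero_le_one (by simpa using prob_le_one)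

lemma chiSq1CDF_monotone : Monotone chiSq1CDF := fun _ _ hst =>
  ENNReal.toReal_mono (measure_ne_top _ _) (measure_mono fun _ hx => le_trans hx hst)

lemma chiSq1CDF_eq_two_mul_integral {t : ℝ} (ht : 0 ≤ t) :
    chiSq1CDF t = 2 * ∫ x in 0..√t, gaussianPDFReal 0 1 x := by
  rw [chiSq1CDF, setOf_sq_le_eq_Icc ht, gaussianReal_apply_eq_integral 0 one_ne_zero,
    ENNReal.toReal_ofReal
      (setIntegral_nonneg measurableSet_Icc fun x _ => gaussianPDFReal_nonneg 0 1 x),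
    integral_Icc_eq_integral_Ioc, ← integral_of_le (by simp),
    integral_neg_self_eq_two_mul (continuous_gaussianPDFReal 0 1) (gaussianPDFReal_zero_neg 1)]

lemma chiSq1CDF_concaveOn : ConcaveOn ℝ (Ici 0) chiSq1CDF :=
  ((concaveOn_integral_sqrt (continuous_gaussianPDFReal 0 1) (gaussianPDFReal_nonneg 0 1)
    (gaussianPDFReal_antitoneOn 0 1)).smul zero_le_two).congr
    fun _ ht => (chiSq1CDF_eq_two_mul_integral ht).symm

lemma chiSq1CDF_continuousOn : ContinuousOn chiSq1CDF (Ici 0) :=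
  ((continuous_integral_sqrt (continuous_gaussianPDFReal 0 1)).continuousOn.const_smul
    (2 : ℝ)).congr fun _ ht => chiSq1CDF_eq_two_mul_integral ht

lemma ProbabilityTheory.IndepFun.measure_mem_eq_lintegral {Ω α β : Type*}
    [MeasurableSpace Ω] [MeasurableSpace α] [MeasurableSpace β] {μ : Measure Ω}
    [IsFiniteMeasure μ] {X : Ω → α} {Y : Ω → β} (hX : AEMeasurable X μ) (hY : AEMeasurable Y μ)
    (hXY : IndepFun X Y μ) {s : Set (α × β)} (hs : MeasurableSet s) :
    μ {ω | (X ω, Y ω) ∈ s} = ∫⁻ ω, μ.map X {x | (x, Y ω) ∈ s} ∂μ := by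
  change μ ((fun ω => (X ω, Y ω)) ⁻¹' s) = _
  rw [← Measure.map_apply_of_aemeasurable (hX.prodMk hY) hs,
    (indepFun_iff_map_prod_eq_prod_map_map hX hY).1 hXY, Measure.prod_apply_symm hs,
    lintegral_map' (measurable_measure_prodMk_right hs).aemeasurable hY]
  rfl

/-- if `ξ ~ N(0,1)` and `η ≥ 0` is integrable and independent of `ξ`,
then `P(ξ² ≤ η) ≤ χ₁²(E[η])`. -/
theorem prob_sq_le_indep_le_chiSq1CDF_expectation
    {Ω : Type*} [MeasureSpace Ω] [IsProbabilityMeasure (ℙ : Measure Ω)]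
    (ξ η : Ω → ℝ)
    (hξ : Measure.map ξ ℙ = gaussianReal 0 1)
    (hη0 : ∀ ω, 0 ≤ η ω) (hηint : Integrable η ℙ)
    (hindep : IndepFun ξ η ℙ) :
    ℙ {ω | ξ ω ^ 2 ≤ η ω} ≤ ENNReal.ofReal (chiSq1CDF (∫ ω, η ω)) := by
  have hξm : AEMeasurable ξ ℙ := .of_map_ne_zero (hξ ▸ IsProbabilityMeasure.ne_zero _)
  have hFη : Integrable (fun ω => chiSq1CDF (η ω)) ℙ :=
    .of_bound (chiSq1CDF_monotone.measurable.comp_aemeasurable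
      hηint.aemeasurable).aestronglyMeasurable 1 (.of_forall fun ω => by
        rw [Real.norm_of_nonneg (chiSq1CDF_nonneg _)]; exact chiSq1CDF_le_one _)
  calc ℙ {ω | ξ ω ^ 2 ≤ η ω}
      = ∫⁻ ω, gaussianReal 0 1 {x : ℝ | x ^ 2 ≤ η ω} := by
        rw [← hξ]
        exact hindep.measure_mem_eq_lintegral hξm hηint.aemeasurable
          (measurableSet_le (measurable_fst.pow_const 2) measurable_snd)
    _ = ENNReal.ofReal (∫ ω, chiSq1CDF (η ω)) := by
        simp_rw [gaussianReal_setOf_sq_le]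
        exact (ofReal_integral_eq_lintegral_ofReal hFη
          (.of_forall fun _ => chiSq1CDF_nonneg _)).symm
    _ ≤ ENNReal.ofReal (chiSq1CDF (∫ ω, η ω)) :=
        ENNReal.ofReal_le_ofReal <| chiSq1CDF_concaveOn.le_map_integral chiSq1CDF_continuousOn
          isClosed_Ici (.of_forall hη0) hηint hFη
end
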